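/- arXiv:1408.4768 — 2 statements merged into one kernel-verified Lean document; each statement's English description precedes it below -/
import Mathlib

section
/- Let λ > 0, a > 0, c > 0 and let q : [0,∞) → (0,∞) be differentiable such that e^{λt}q(t) is non-increasing with limit C > 0, and (d/dt)(ln q(t) + λt) ≥ -c e^{-at} for all t ≥ 0. Then for all t ≥ 0, C ≤ e^{λt} q(t) ≤ C exp((c/a) e^{-at}); consequently q(t) = C e^{-λt}(1 + O(e^{-at})) as t → ∞. -/
open Real Filter Set Asymptotics

/-!
The lower bound is monotonicity of `e^{λt} q(t)` towards its limit `C`. For the upper bound,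
`f(t) = ln q(t) + λt - (c/a) e^{-at}` has nonnegative derivative, hence increases to its limit
`ln C`, so `ln (e^{λt} q(t)) ≤ ln C + (c/a) e^{-at}`. Squeezed between `C` and `C exp ((c/a) e^{-at})`,
`e^{λt} q(t) - C` is `O(e^{-at})` because `e^x - 1 = O(x)` at `0`.
-/

theorem MonotoneOn.le_of_tendsto_atTop {α β : Type*} [SemilatticeSup α] [Nonempty α]
    [TopologicalSpace β] [Preorder β] [OrderClosedTopology β] {f : α → β} {a₀ : α} {b : β}
    (hf : MonotoneOn f (Ici a₀)) (hlim : Tendsto f atTop (nhds b)) {a : α} (ha : a₀ ≤ a) :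
    f a ≤ b :=
  ge_of_tendsto hlim <| by
    filter_upwards [eventually_ge_atTop a] with x hx using hf ha (ha.trans hx) hx

theorem AntitoneOn.le_of_tendsto_atTop {α β : Type*} [SemilatticeSup α] [Nonempty α]
    [TopologicalSpace β] [Preorder β] [OrderClosedTopology β] {f : α → β} {a₀ : α} {b : β}
    (hf : AntitoneOn f (Ici a₀)) (hlim : Tendsto f atTop (nhds b)) {a : α} (ha : a₀ ≤ a) :
    b ≤ f a :=
  le_of_tendsto hlim <| by
    filter_upwards [eventually_ge_atTop a] with x hx using hf ha (ha.trans hx) hx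

theorem sub_le_of_deriv_le_of_tendsto {f g : ℝ → ℝ} {t₀ L : ℝ}
    (hf : ∀ t ∈ Ici t₀, DifferentiableAt ℝ f t) (hg : ∀ t ∈ Ici t₀, DifferentiableAt ℝ g t)
    (hfg : ∀ t ∈ Ici t₀, deriv g t ≤ deriv f t)
    (hlim : Tendsto (fun t => f t - g t) atTop (nhds L)) {t : ℝ} (ht : t₀ ≤ t) :
    f t - g t ≤ L := by
  have hdiff : ∀ t ∈ Ici t₀, DifferentiableAt ℝ (fun s => f s - g s) t :=
    fun t ht => (hf t ht).sub (hg t ht)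
  have hmono : MonotoneOn (fun s => f s - g s) (Ici t₀) := by
    refine monotoneOn_of_deriv_nonneg (convex_Ici t₀)
      (fun s hs => (hdiff s hs).continuousAt.continuousWithinAt)
      (fun s hs => (hdiff s (interior_subset hs)).differentiableWithinAt) fun s hs => ?_
    have hs := interior_subset hs
    rw [deriv_fun_sub (hf s hs) (hg s hs), sub_nonneg]
    exact hfg s hs
  exact hmono.le_of_tendsto_atTop hlim ht

theorem hasDerivAt_div_mul_exp_neg_mul {a : ℝ} (ha : a ≠ 0) (c t : ℝ) :
    HasDerivAt (fun s => c / a * exp (-a * s)) (-c * exp (-a * t)) t := by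
  refine ((((hasDerivAt_id' t).const_mul (-a)).exp).const_mul (c / a)).congr_deriv ?_
  field_simp

theorem tendsto_mul_exp_neg_mul_atTop_nhds_zero {a : ℝ} (ha : 0 < a) (b : ℝ) :
    Tendsto (fun s => b * exp (-a * s)) atTop (nhds 0) := by
  have h := (tendsto_exp_neg_atTop_nhds_zero.comp (tendsto_id.const_mul_atTop ha)).const_mul b
  simpa [Function.comp_def] using h

theorem log_mul_exp_eq {x : ℝ} (hx : 0 < x) (y : ℝ) : log (exp y * x) = log x + y := by
  rw [log_mul (exp_pos y).ne' hx.ne', log_exp, add_comm]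

theorem isBigO_sub_of_le_of_le_mul_exp {α : Type*} {l : Filter α} {p G : α → ℝ} {C : ℝ}
    (hlow : ∀ᶠ x in l, C ≤ p x) (hup : ∀ᶠ x in l, p x ≤ C * exp (G x))
    (hG : Tendsto G l (nhds 0)) : (fun x => p x - C) =O[l] G := by
  have hexp : (fun x => exp (G x) - 1) =O[l] G := by
    simpa [Function.comp_def] using (hasDerivAt_exp 0).isBigO_sub.comp_tendsto hG
  refine IsBigO.trans (IsBigO.of_bound' ?_) (hexp.const_mul_left C)
  filter_upwards [hlow, hup] with x hlo hhi
  rw [norm_of_nonneg (sub_nonneg.mpr hlo)]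
  exact le_trans (by linarith) (le_norm_self _)

theorem exp_mul_le_mul_exp_of_deriv_log_ge {lam a c C : ℝ} {q : ℝ → ℝ} (ha : 0 < a) (hC : 0 < C)
    (hpos : ∀ t : ℝ, 0 ≤ t → 0 < q t) (hdiff : ∀ t : ℝ, 0 ≤ t → DifferentiableAt ℝ q t)
    (hlim : Tendsto (fun t => exp (lam * t) * q t) atTop (nhds C))
    (hineq : ∀ t : ℝ, 0 ≤ t → deriv (fun s => log (q s) + lam * s) t ≥ -c * exp (-a * t))
    {t : ℝ} (ht : 0 ≤ t) : exp (lam * t) * q t ≤ C * exp (c / a * exp (-a * t)) := by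
  set f : ℝ → ℝ := fun s => log (q s) + lam * s
  have hG := hasDerivAt_div_mul_exp_neg_mul ha.ne' c
  have hf_lim : Tendsto f atTop (nhds (log C)) := by
    refine ((continuousAt_log hC.ne').tendsto.comp hlim).congr' ?_
    filter_upwards [eventually_ge_atTop 0] with s hs using log_mul_exp_eq (hpos s hs) _
  have hf_diff : ∀ s ∈ Ici 0, DifferentiableAt ℝ f s :=
    fun s hs => ((hdiff s hs).log (hpos s hs).ne').add (by fun_prop)
  have hf_sub_le : f t - c / a * exp (-a * t) ≤ log C := by
    refine sub_le_of_deriv_le_of_tendsto hf_diff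
      (fun s _ => (hG s).differentiableAt) (fun s hs => (hG s).deriv ▸ hineq s hs) ?_ ht
    simpa only [sub_zero] using hf_lim.sub (tendsto_mul_exp_neg_mul_atTop_nhds_zero ha (c / a))
  calc exp (lam * t) * q t = exp (f t) := by
        rw [show f t = _ from (log_mul_exp_eq (hpos t ht) _).symm,
          exp_log (mul_pos (exp_pos _) (hpos t ht))]
    _ ≤ exp (log C + c / a * exp (-a * t)) := exp_le_exp.mpr (by linarith)
    _ = C * exp (c / a * exp (-a * t)) := by rw [exp_add, exp_log hC]

theorem exp_tail_approx_general (lam a c C : ℝ) (ha : 0 < a)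
    (hC : 0 < C) (q : ℝ → ℝ) (hpos : ∀ t : ℝ, 0 ≤ t → 0 < q t)
    (hdiff : ∀ t : ℝ, 0 ≤ t → DifferentiableAt ℝ q t)
    (hmono : AntitoneOn (fun t => Real.exp (lam * t) * q t) (Set.Ici 0))
    (hlim : Tendsto (fun t => Real.exp (lam * t) * q t) atTop (nhds C))
    (hineq : ∀ t : ℝ, 0 ≤ t →
      deriv (fun s => Real.log (q s) + lam * s) t ≥ -c * Real.exp (-a * t)) :
    (∀ t : ℝ, 0 ≤ t → C ≤ Real.exp (lam * t) * q t ∧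
      Real.exp (lam * t) * q t ≤ C * Real.exp (c / a * Real.exp (-a * t))) ∧
    (fun t => q t - C * Real.exp (-lam * t)) =O[atTop]
      (fun t => Real.exp (-lam * t) * Real.exp (-a * t)) := by
  have hbounds (t : ℝ) (ht : 0 ≤ t) := And.intro (hmono.le_of_tendsto_atTop hlim ht)
    (exp_mul_le_mul_exp_of_deriv_log_ge ha hC hpos hdiff hlim hineq ht)
  refine ⟨hbounds, ?_⟩
  have hO : (fun t => exp (lam * t) * q t - C) =O[atTop] fun t => c / a * exp (-a * t) :=
    isBigO_sub_of_le_of_le_mul_exp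
      (by filter_upwards [eventually_ge_atTop 0] with t ht using (hbounds t ht).1)
      (by filter_upwards [eventually_ge_atTop 0] with t ht using (hbounds t ht).2)
      (tendsto_mul_exp_neg_mul_atTop_nhds_zero ha (c / a))
  have hfactor : (fun t => q t - C * exp (-lam * t)) =
      fun t => exp (-lam * t) * (exp (lam * t) * q t - C) := by
    ext t
    rw [mul_sub, ← mul_assoc, ← exp_add, neg_mul, neg_add_cancel, exp_zero, one_mul, mul_comm]
  rw [hfactor]
  exact (isBigO_refl _ _).mul (hO.trans (isBigO_const_mul_self _ _ _))

theorem exp_tail_approx (lam a c C : ℝ) (hlam : 0 < lam) (ha : 0 < a) (hc : 0 < c)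
    (hC : 0 < C) (q : ℝ → ℝ) (hpos : ∀ t : ℝ, 0 ≤ t → 0 < q t)
    (hdiff : ∀ t : ℝ, 0 ≤ t → DifferentiableAt ℝ q t)
    (hmono : AntitoneOn (fun t => Real.exp (lam * t) * q t) (Set.Ici 0))
    (hlim : Tendsto (fun t => Real.exp (lam * t) * q t) atTop (nhds C))
    (hineq : ∀ t : ℝ, 0 ≤ t →
      deriv (fun s => Real.log (q s) + lam * s) t ≥ -c * Real.exp (-a * t)) :
    (∀ t : ℝ, 0 ≤ t → C ≤ Real.exp (lam * t) * q t ∧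
      Real.exp (lam * t) * q t ≤ C * Real.exp (c / a * Real.exp (-a * t))) ∧
    (fun t => q t - C * Real.exp (-lam * t)) =O[atTop]
      (fun t => Real.exp (-lam * t) * Real.exp (-a * t)) :=
  exp_tail_approx_general lam a c C ha hC q hpos hdiff hmono hlim hineq
end

section
/- Let C ∈ (0,1], λ > 0, a > 0, w ∈ ℝ. For each n let (z_k^{(n)})_{k≥1} be natural numbers with S_n := Σ_k k z_k^{(n)} → ∞ and Σ_k k² z_k^{(n)} = o(S_n^{1+a/λ}). Set t_n = λ^{-1}(ln(C S_n) + w). Suppose q_k : [0,∞) → [0,1) satisfies q_k(t) ≤ k e^{-λt} and q_k(t) = C k e^{-λt}(1 + r_k(t)) with |r_k(t)| ≤ M k e^{-at} for all k ≥ 1, t ≥ 0. Then Σ_{k≥1} z_k^{(n)} ln(1 - q_k(t_n)) → -e^{-w} as n → ∞. -/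
open Real Filter Topology Asymptotics

/-!
Write `u = e^{-λ t_n} = e^{-w} / (C S_n)` and `v = e^{-a t_n}`. Since `|log (1 - h) + h| ≤ 2 h²`
for `0 ≤ h ≤ 1/2` and `q_k ≤ k u`, the sum differs from `-∑ z_k q_k` by at most `2 u² ∑ k² z_k`,
and by the asymptotics of `q_k`, `∑ z_k q_k` differs from `C u S_n = e^{-w}` by at most
`C M u v ∑ k² z_k`. These errors are constant multiples of `∑ k² z_k / S_n²` and
`∑ k² z_k / S_n^{1 + a/λ}`, which tend to `0` by the moment condition once `a ≤ λ`. Finally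
`a ≤ λ` is forced: for `a > λ` the asymptotics of `q_k` contradict `q_k < 1` for large `k`.
-/

lemma abs_log_one_sub_add_le {x : ℝ} (hx0 : 0 ≤ x) (hx : x ≤ 1 / 2) :
    |log (1 - x) + x| ≤ 2 * x ^ 2 := by
  have h := abs_log_sub_add_sum_range_le (show |x| < 1 by rw [abs_of_nonneg hx0]; linarith) 1
  rw [abs_of_nonneg hx0] at h
  simp only [Finset.range_one, Finset.sum_singleton, zero_add, pow_one, Nat.cast_zero,
    div_one] at h
  rw [add_comm]
  calc |x + log (1 - x)| ≤ x ^ 2 / (1 - x) := h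
    _ ≤ 2 * x ^ 2 := by rw [div_le_iff₀ (by linarith)]; nlinarith [sq_nonneg x]

lemma abs_sum_mul_log_one_sub_add_le {s : Finset ℕ} {z q : ℕ → ℝ} {C M u v : ℝ}
    (hz : ∀ k ∈ s, 0 ≤ z k) (hq0 : ∀ k ∈ s, 0 ≤ q k) (hq_half : ∀ k ∈ s, q k ≤ 1 / 2)
    (hqle : ∀ k ∈ s, q k ≤ k * u)
    (hqasym : ∀ k ∈ s, |q k - C * k * u| ≤ C * k * u * (M * k * v)) :
    |∑ k ∈ s, z k * log (1 - q k) + C * u * ∑ k ∈ s, k * z k| ≤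
      (C * M * u * v + 2 * u ^ 2) * ∑ k ∈ s, (k : ℝ) ^ 2 * z k := by
  have hlog : |∑ k ∈ s, z k * log (1 - q k) + ∑ k ∈ s, z k * q k| ≤
      ∑ k ∈ s, 2 * u ^ 2 * (k ^ 2 * z k) := by
    rw [← Finset.sum_add_distrib]
    refine (Finset.abs_sum_le_sum_abs _ _).trans (Finset.sum_le_sum fun k hk => ?_)
    rw [← mul_add, abs_mul, abs_of_nonneg (hz k hk)]
    have hq2 : q k ^ 2 ≤ (k * u) ^ 2 := pow_le_pow_left₀ (hq0 k hk) (hqle k hk) 2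
    nlinarith [abs_log_one_sub_add_le (hq0 k hk) (hq_half k hk), hz k hk]
  have hlin : |∑ k ∈ s, z k * q k - C * u * ∑ k ∈ s, k * z k| ≤
      ∑ k ∈ s, C * M * u * v * (k ^ 2 * z k) := by
    rw [Finset.mul_sum, ← Finset.sum_sub_distrib]
    refine (Finset.abs_sum_le_sum_abs _ _).trans (Finset.sum_le_sum fun k hk => ?_)
    calc |z k * q k - C * u * (k * z k)| = z k * |q k - C * k * u| := by
          rw [show z k * q k - C * u * (k * z k) = z k * (q k - C * k * u) by ring, abs_mul,
            abs_of_nonneg (hz k hk)]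
      _ ≤ z k * (C * k * u * (M * k * v)) := mul_le_mul_of_nonneg_left (hqasym k hk) (hz k hk)
      _ = C * M * u * v * (k ^ 2 * z k) := by ring
  rw [← Finset.mul_sum] at hlog hlin
  calc _ = |(∑ k ∈ s, z k * log (1 - q k) + ∑ k ∈ s, z k * q k) -
        (∑ k ∈ s, z k * q k - C * u * ∑ k ∈ s, k * z k)| := by ring_nf
    _ ≤ _ := abs_sub _ _
    _ ≤ _ := by linarith

lemma finite_support_of_summable_natCast {g : ℕ → ℕ} (h : Summable fun k => (g k : ℝ)) :
    (Function.support g).Finite := by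
  exact (eventually_cofinite.mp (h.tendsto_cofinite_zero.eventually (gt_mem_nhds one_pos))).subset
    fun k hk => by simpa using hk

lemma abs_tsum_mul_log_one_sub_add_le {z : ℕ → ℕ} (hz0 : z 0 = 0)
    (hsum : Summable fun k : ℕ => (k : ℝ) ^ 2 * z k) {q : ℕ → ℝ} {C M u v : ℝ}
    (hq0 : ∀ k, 1 ≤ k → 0 ≤ q k) (hqle : ∀ k, 1 ≤ k → q k ≤ k * u)
    (hqasym : ∀ k, 1 ≤ k → |q k - C * k * u| ≤ C * k * u * (M * k * v))
    (hsmall : u ^ 2 * ∑' k : ℕ, (k : ℝ) ^ 2 * z k ≤ 1 / 4) :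
    |∑' k, (z k : ℝ) * log (1 - q k) + C * u * ∑' k : ℕ, (k : ℝ) * z k| ≤
      (C * M * u * v + 2 * u ^ 2) * ∑' k : ℕ, (k : ℝ) ^ 2 * z k := by
  have hfin := finite_support_of_summable_natCast (g := fun k => k ^ 2 * z k) (by simpa using hsum)
  set s := hfin.toFinset
  have hmem : ∀ k, k ∈ s ↔ 1 ≤ k ∧ z k ≠ 0 := by
    intro k
    rcases k with _ | k <;> simp [s, hz0]
  have hzero : ∀ k ∉ s, z k = 0 := fun k hk => by
    rcases k with _ | k
    · exact hz0
    · simpa [hmem] using hk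
  rw [tsum_eq_sum (s := s) fun k hk => by simp [hzero k hk]] at hsmall
  rw [tsum_eq_sum (s := s) fun k hk => by simp [hzero k hk],
    tsum_eq_sum (s := s) fun k hk => by simp [hzero k hk],
    tsum_eq_sum (s := s) fun k hk => by simp [hzero k hk]]
  have hk_sq_le : ∀ k ∈ s, (k : ℝ) ^ 2 ≤ ∑ j ∈ s, (j : ℝ) ^ 2 * z j := fun k hk => by
    have hz1 : (1 : ℝ) ≤ z k := by exact_mod_cast Nat.one_le_iff_ne_zero.mpr ((hmem k).1 hk).2
    refine le_trans ?_ (Finset.single_le_sum (fun j _ => by positivity) hk)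
    nlinarith [sq_nonneg (k : ℝ)]
  refine abs_sum_mul_log_one_sub_add_le (fun k _ => Nat.cast_nonneg _)
    (fun k hk => hq0 k ((hmem k).1 hk).1) (fun k hk => ?_)
    (fun k hk => hqle k ((hmem k).1 hk).1) (fun k hk => hqasym k ((hmem k).1 hk).1)
  have hk1 := ((hmem k).1 hk).1
  -- `q_k ≤ k u` and `(k u)² ≤ u² ∑ j² z_j ≤ 1/4`
  have : (k * u) ^ 2 ≤ 1 / 4 := by nlinarith [hk_sq_le k hk, sq_nonneg u]
  nlinarith [hqle k hk1, hq0 k hk1]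

lemma one_le_of_natCast_le_mul_rpow {B p : ℝ} (h : ∀ k : ℕ, 1 ≤ k → (k : ℝ) ≤ B * (k : ℝ) ^ p) :
    1 ≤ p := by
  by_contra! hp
  have hlim : Tendsto (fun k : ℕ => (k : ℝ) ^ (1 - p)) atTop atTop :=
    (tendsto_rpow_atTop (by linarith)).comp tendsto_natCast_atTop_atTop
  obtain ⟨k, hk1, hkB⟩ :=
    ((eventually_ge_atTop 1).and (hlim.eventually_gt_atTop B)).exists
  have hk : (0 : ℝ) < k := by exact_mod_cast hk1
  have hsplit : (k : ℝ) = (k : ℝ) ^ (1 - p) * (k : ℝ) ^ p := by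
    rw [← rpow_add hk, sub_add_cancel, rpow_one]
  have := (mul_lt_mul_of_pos_right hkB (rpow_pos_of_pos hk p)).trans_eq hsplit.symm
  linarith [h k hk1]

lemma le_of_lt_one_of_abs_sub_le {C lam a M : ℝ} (hC0 : 0 < C) (ha : 0 < a) (q : ℕ → ℝ → ℝ)
    (hq1 : ∀ k : ℕ, 1 ≤ k → ∀ s : ℝ, 0 ≤ s → q k s < 1)
    (hqasym : ∀ k : ℕ, 1 ≤ k → ∀ s : ℝ, 0 ≤ s →
      |q k s - C * k * exp (-lam * s)| ≤ C * k * exp (-lam * s) * (M * k * exp (-a * s))) :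
    a ≤ lam := by
  set D := 2 * max M 1
  have hD : 2 ≤ D := by simp [D]
  suffices 1 ≤ lam / a by rwa [le_div_iff₀ ha, one_mul] at this
  refine one_le_of_natCast_le_mul_rpow (B := 2 / C * D ^ (lam / a)) fun k hk => ?_
  have hk0 : (1 : ℝ) ≤ k := by exact_mod_cast hk
  have hDk : 0 < D * k := by positivity
  -- at the time `s` with `e^{-as} = 1/(Dk)` the relative error is at most `1/2`, so
  -- `1 > q_k(s) ≥ C k (Dk)^{-λ/a} / 2`
  set s := log (D * k) / a
  have hs : 0 ≤ s := div_nonneg (log_nonneg (by nlinarith)) ha.le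
  have hv : exp (-a * s) = (D * k)⁻¹ := by
    rw [neg_mul, mul_div_cancel₀ _ ha.ne', exp_neg, exp_log hDk]
  have hu : exp (-lam * s) = (D * k) ^ (-(lam / a)) := by
    rw [rpow_def_of_pos hDk]
    congr 1
    simp only [s]
    ring
  have hMkv : M * k * exp (-a * s) ≤ 1 / 2 := by
    rw [hv, ← div_eq_mul_inv, div_le_iff₀ hDk]
    nlinarith [le_max_left M 1]
  have hq := (abs_le.mp (hqasym k hk s hs)).1
  have hCku : C * k * exp (-lam * s) < 2 := by
    nlinarith [hq1 k hk s hs, exp_pos (-lam * s), mul_pos hC0 (by linarith : (0:ℝ) < k)]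
  rw [hu, rpow_neg hDk.le, mul_rpow (by linarith) (by linarith), ← div_eq_mul_inv,
    div_lt_iff₀ (by positivity)] at hCku
  rw [div_mul_eq_mul_div, div_mul_eq_mul_div, le_div_iff₀ hC0]
  linarith

lemma exp_neg_mul_log_add_div {lam x : ℝ} (hx : 0 < x) (b w : ℝ) :
    exp (-b * ((log x + w) / lam)) = exp (-(b / lam * w)) * x ^ (-(b / lam)) := by
  rw [rpow_def_of_pos hx, ← exp_add]
  ring_nf

lemma exp_neg_mul_log_add_div_self {lam x : ℝ} (hlam : lam ≠ 0) (hx : 0 < x) (w : ℝ) :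
    exp (-lam * ((log x + w) / lam)) = exp (-w) / x := by
  rw [exp_neg_mul_log_add_div hx, div_self hlam, one_mul, rpow_neg_one, div_eq_mul_inv]

section Remainders

variable {ι : Type*} {l : Filter ι} {C lam a w : ℝ} {S Q t : ι → ℝ}

lemma tendsto_exp_mul_exp_mul_of_isLittleO (hC0 : 0 < C) (hlam : 0 < lam)
    (hS : Tendsto S l atTop) (hQ : Q =o[l] fun n => S n ^ (1 + a / lam))
    (ht : ∀ n, t n = (log (C * S n) + w) / lam) :
    Tendsto (fun n => exp (-lam * t n) * exp (-a * t n) * Q n) l (𝓝 0) := by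
  have hK := hQ.tendsto_div_nhds_zero.const_mul
    (exp (-w) * exp (-(a / lam * w)) * C ^ (-(1 + a / lam)))
  rw [mul_zero] at hK
  refine hK.congr' ?_
  filter_upwards [hS.eventually_gt_atTop 0] with n hSn
  have hCS : 0 < C * S n := mul_pos hC0 hSn
  rw [ht n, exp_neg_mul_log_add_div_self hlam.ne' hCS, exp_neg_mul_log_add_div hCS,
    rpow_neg hCS.le, mul_rpow hC0.le hSn.le, rpow_neg hC0.le, rpow_add hC0, rpow_add hSn,
    rpow_one, rpow_one]
  field_simp

lemma tendsto_exp_sq_mul_of_isLittleO (hC0 : 0 < C) (hlam : 0 < lam) (hal : a ≤ lam)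
    (hS : Tendsto S l atTop) (hQ : Q =o[l] fun n => S n ^ (1 + a / lam))
    (ht : ∀ n, t n = (log (C * S n) + w) / lam) :
    Tendsto (fun n => exp (-lam * t n) ^ 2 * Q n) l (𝓝 0) := by
  have hpow : (fun n => S n ^ (1 + a / lam)) =O[l] fun n => S n ^ 2 := by
    refine IsBigO.of_bound 1 ?_
    filter_upwards [hS.eventually_ge_atTop 1] with n hSn
    have hexp : 1 + a / lam ≤ 2 := by linarith [(div_le_one hlam).mpr hal]
    rw [one_mul, norm_of_nonneg (by positivity), norm_of_nonneg (by positivity), ← rpow_two]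
    exact rpow_le_rpow_of_exponent_le hSn hexp
  have hK := (hQ.trans_isBigO hpow).tendsto_div_nhds_zero.const_mul ((exp (-w) / C) ^ 2)
  rw [mul_zero] at hK
  refine hK.congr' ?_
  filter_upwards [hS.eventually_gt_atTop 0] with n hSn
  rw [ht n, exp_neg_mul_log_add_div_self hlam.ne' (mul_pos hC0 hSn)]
  field_simp

end Remainders

theorem gumbel_core_general (C lam a w M : ℝ) (hC0 : 0 < C) (hlam : 0 < lam)
    (ha : 0 < a) (z : ℕ → ℕ → ℕ) (hz0 : ∀ n, z n 0 = 0)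
    (hzsum : ∀ n, Summable (fun k : ℕ => (k : ℝ) ^ 2 * z n k))
    (S : ℕ → ℝ) (hS : ∀ n, S n = ∑' k : ℕ, (k : ℝ) * z n k)
    (hStop : Tendsto S atTop atTop)
    (hmom : (fun n => ∑' k : ℕ, (k : ℝ) ^ 2 * z n k) =o[atTop]
      (fun n => S n ^ (1 + a / lam)))
    (t : ℕ → ℝ) (ht : ∀ n, t n = (Real.log (C * S n) + w) / lam)
    (q : ℕ → ℝ → ℝ)
    (hq01 : ∀ k : ℕ, 1 ≤ k → ∀ s : ℝ, 0 ≤ s → 0 ≤ q k s ∧ q k s < 1)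
    (hqle : ∀ k : ℕ, 1 ≤ k → ∀ s : ℝ, 0 ≤ s → q k s ≤ k * Real.exp (-lam * s))
    (hqasym : ∀ k : ℕ, 1 ≤ k → ∀ s : ℝ, 0 ≤ s →
      |q k s - C * k * Real.exp (-lam * s)| ≤
        C * k * Real.exp (-lam * s) * (M * k * Real.exp (-a * s))) :
    Tendsto (fun n => ∑' k : ℕ, (z n k : ℝ) * Real.log (1 - q k (t n))) atTop
      (nhds (-Real.exp (-w))) := by
  have hal : a ≤ lam :=
    le_of_lt_one_of_abs_sub_le hC0 ha q (fun k hk s hs => (hq01 k hk s hs).2) hqasym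
  have huvQ := tendsto_exp_mul_exp_mul_of_isLittleO hC0 hlam hStop hmom ht
  have hu2Q := tendsto_exp_sq_mul_of_isLittleO hC0 hlam hal hStop hmom ht
  have ht0 : ∀ᶠ n in atTop, 0 ≤ t n := by
    filter_upwards [(tendsto_log_atTop.comp (hStop.const_mul_atTop hC0)).eventually_ge_atTop (-w)]
      with n hn
    rw [ht n]
    exact div_nonneg (neg_le_iff_add_nonneg.mp hn) hlam.le
  have hbound : ∀ᶠ n in atTop, ‖∑' k : ℕ, (z n k : ℝ) * log (1 - q k (t n)) - -exp (-w)‖ ≤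
      C * M * (exp (-lam * t n) * exp (-a * t n) * ∑' k : ℕ, (k : ℝ) ^ 2 * z n k) +
        2 * (exp (-lam * t n) ^ 2 * ∑' k : ℕ, (k : ℝ) ^ 2 * z n k) := by
    filter_upwards [hStop.eventually_gt_atTop 0, ht0,
      hu2Q.eventually (ge_mem_nhds (show (0 : ℝ) < 1 / 4 by norm_num))] with n hSn htn hsmall
    have hmain := abs_tsum_mul_log_one_sub_add_le (hz0 n) (hzsum n)
      (fun k hk => (hq01 k hk _ htn).1) (fun k hk => hqle k hk _ htn)
      (fun k hk => hqasym k hk _ htn) hsmall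
    have hmean : C * exp (-lam * t n) * ∑' k : ℕ, (k : ℝ) * z n k = exp (-w) := by
      rw [← hS n, ht n, exp_neg_mul_log_add_div_self hlam.ne' (mul_pos hC0 hSn)]
      field_simp
    rw [hmean] at hmain
    rw [norm_eq_abs, sub_neg_eq_add]
    linarith
  have hlim := (huvQ.const_mul (C * M)).add (hu2Q.const_mul 2)
  rw [mul_zero, mul_zero, add_zero] at hlim
  exact tendsto_sub_nhds_zero_iff.mp (squeeze_zero_norm' hbound hlim)

theorem gumbel_core (C lam a w M : ℝ) (hC0 : 0 < C) (hC1 : C ≤ 1) (hlam : 0 < lam)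
    (ha : 0 < a) (z : ℕ → ℕ → ℕ) (hz0 : ∀ n, z n 0 = 0)
    (hzsum : ∀ n, Summable (fun k : ℕ => (k : ℝ) ^ 2 * z n k))
    (S : ℕ → ℝ) (hS : ∀ n, S n = ∑' k : ℕ, (k : ℝ) * z n k)
    (hStop : Tendsto S atTop atTop)
    (hmom : (fun n => ∑' k : ℕ, (k : ℝ) ^ 2 * z n k) =o[atTop]
      (fun n => S n ^ (1 + a / lam)))
    (t : ℕ → ℝ) (ht : ∀ n, t n = (Real.log (C * S n) + w) / lam)
    (q : ℕ → ℝ → ℝ)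
    (hq01 : ∀ k : ℕ, 1 ≤ k → ∀ s : ℝ, 0 ≤ s → 0 ≤ q k s ∧ q k s < 1)
    (hqle : ∀ k : ℕ, 1 ≤ k → ∀ s : ℝ, 0 ≤ s → q k s ≤ k * Real.exp (-lam * s))
    (hqasym : ∀ k : ℕ, 1 ≤ k → ∀ s : ℝ, 0 ≤ s →
      |q k s - C * k * Real.exp (-lam * s)| ≤
        C * k * Real.exp (-lam * s) * (M * k * Real.exp (-a * s))) :
    Tendsto (fun n => ∑' k : ℕ, (z n k : ℝ) * Real.log (1 - q k (t n))) atTop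
      (nhds (-Real.exp (-w))) :=
  gumbel_core_general C lam a w M hC0 hlam ha z hz0 hzsum S hS hStop hmom t ht q hq01 hqle hqasym
end
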